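/- Let g : ℝ → ℝ be measurable and θ, ν probability measures with ∫ |g| dθ < ∞. Then ∫ g dθ − log ∫ e^g dν ≤ R(θ‖ν), where R is relative entropy. -/
import Mathlib


open MeasureTheory Real

/-- Relative entropy via its Donsker–Varadhan representation over bounded measurable functions. -/
noncomputable def klSup (μ ν : Measure ℝ) : EReal :=
  ⨆ (g : ℝ → ℝ) (_ : Measurable g ∧ ∃ C, ∀ x, |g x| ≤ C),
    (((∫ x, g x ∂μ) - Real.log (∫ x, Real.exp (g x) ∂ν) : ℝ) : EReal)

/-- Unbounded version of the Donsker–Varadhan inequality: if `g` is measurable with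
`∫ |g| dθ < ∞`, then `∫ g dθ − log ∫ e^g dν ≤ R(θ‖ν)`. -/
theorem integral_sub_log_le_klSup
    (g : ℝ → ℝ) (hg : Measurable g)
    (θ ν : Measure ℝ) [IsProbabilityMeasure θ] [IsProbabilityMeasure ν]
    (hint : Integrable g θ) :
    ((∫ x, g x ∂θ : ℝ) : EReal) - ENNReal.log (∫⁻ x, ENNReal.ofReal (Real.exp (g x)) ∂ν)
      ≤ klSup θ ν := by
  by_cases htop : ∫⁻ x, ENNReal.ofReal (Real.exp (g x)) ∂ν = ⊤
  · rw [htop, ENNReal.log_top]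
    rw [EReal.sub_top]
    exact bot_le
  -- exp ∘ g is integrable w.r.t. ν
  have hexp_meas : Measurable fun x => Real.exp (g x) := (Real.continuous_exp.measurable).comp hg
  have hexp_nn : 0 ≤ᵐ[ν] fun x => Real.exp (g x) :=
    Filter.Eventually.of_forall fun x => (Real.exp_pos _).le
  have hexp_int : Integrable (fun x => Real.exp (g x)) ν := by
    refine ⟨hexp_meas.aestronglyMeasurable, ?_⟩
    rw [hasFiniteIntegral_iff_ofReal hexp_nn]
    exact lt_top_iff_ne_top.2 htop
  set Lr : ℝ := ∫ x, Real.exp (g x) ∂ν with hLr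
  have hLr_pos : 0 < Lr := integral_exp_pos hexp_int
  have hlin : ∫⁻ x, ENNReal.ofReal (Real.exp (g x)) ∂ν = ENNReal.ofReal Lr :=
    (ofReal_integral_eq_lintegral_ofReal hexp_int hexp_nn).symm
  rw [hlin, ENNReal.log_ofReal_of_pos hLr_pos]
  rw [← EReal.coe_sub]
  -- truncations
  set G : ℕ → ℝ → ℝ := fun n x => max (min (g x) n) (-(n : ℝ)) with hG
  have hGmeas : ∀ n, Measurable (G n) := fun n => (hg.min measurable_const).max measurable_const
  have hGabs : ∀ n x, |G n x| ≤ |g x| := by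
    intro n x
    have h0 : (0:ℝ) ≤ n := n.cast_nonneg
    rw [abs_le]
    constructor
    · exact le_max_of_le_left (le_min (neg_abs_le _) (by linarith [abs_nonneg (g x)]))
    · exact max_le ((min_le_left _ _).trans (le_abs_self _)) (by linarith [abs_nonneg (g x)])
  have hGtend : ∀ x, Filter.Tendsto (fun n => G n x) Filter.atTop (nhds (g x)) := by
    intro x
    have : ∀ n ≥ ⌈|g x|⌉₊, G n x = g x := by
      intro n hn
      have h1 : |g x| ≤ (n : ℝ) := le_trans (Nat.le_ceil _) (by exact_mod_cast hn)
      rw [abs_le] at h1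
      simp [hG, min_eq_left h1.2, max_eq_left h1.1]
    exact tendsto_atTop_of_eventually_const this
  -- G n bounded
  have hGbd : ∀ n, ∃ C, ∀ x, |G n x| ≤ C := by
    intro n
    refine ⟨n, fun x => ?_⟩
    rw [abs_le]
    exact ⟨le_max_right _ _, max_le (min_le_right _ _) (by simp [Nat.cast_nonneg])⟩
  -- each truncation is ≤ klSup
  have hle : ∀ n, (((∫ x, G n x ∂θ) - Real.log (∫ x, Real.exp (G n x) ∂ν) : ℝ) : EReal)
      ≤ klSup θ ν := fun n =>
    le_iSup₂_of_le (G n) ⟨hGmeas n, hGbd n⟩ le_rfl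
  -- convergence of integrals
  have htend1 : Filter.Tendsto (fun n => ∫ x, G n x ∂θ) Filter.atTop (nhds (∫ x, g x ∂θ)) := by
    refine tendsto_integral_of_dominated_convergence (fun x => |g x|)
      (fun n => (hGmeas n).aestronglyMeasurable) hint.abs ?_ ?_
    · intro n
      exact Filter.Eventually.of_forall fun x => by
        rw [Real.norm_eq_abs]; exact hGabs n x
    · exact Filter.Eventually.of_forall hGtend
  have htend2 : Filter.Tendsto (fun n => ∫ x, Real.exp (G n x) ∂ν) Filter.atTop (nhds Lr) := by
    refine tendsto_integral_of_dominated_convergence (fun x => Real.exp (g x) + 1)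
      (fun n => ((Real.continuous_exp.measurable).comp (hGmeas n)).aestronglyMeasurable)
      (hexp_int.add (integrable_const 1)) ?_ ?_
    · intro n
      refine Filter.Eventually.of_forall fun x => ?_
      rw [Real.norm_eq_abs, abs_of_pos (Real.exp_pos _)]
      have : G n x ≤ max (g x) 0 := max_le ((min_le_left _ _).trans (le_max_left _ _))
        ((neg_nonpos.2 (Nat.cast_nonneg n)).trans (le_max_right _ _))
      calc Real.exp (G n x) ≤ Real.exp (max (g x) 0) := Real.exp_le_exp.2 this
        _ ≤ Real.exp (g x) + 1 := by
            rcases le_total (g x) 0 with h | h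
            · rw [max_eq_right h, Real.exp_zero]
              linarith [Real.exp_pos (g x)]
            · rw [max_eq_left h]; linarith
    · exact Filter.Eventually.of_forall fun x =>
        (Real.continuous_exp.tendsto _).comp (hGtend x)
  have htend3 : Filter.Tendsto
      (fun n => (∫ x, G n x ∂θ) - Real.log (∫ x, Real.exp (G n x) ∂ν)) Filter.atTop
      (nhds ((∫ x, g x ∂θ) - Real.log Lr)) :=
    htend1.sub (((Real.continuousAt_log hLr_pos.ne').tendsto).comp htend2)
  have htendE : Filter.Tendsto
      (fun n => (((∫ x, G n x ∂θ) - Real.log (∫ x, Real.exp (G n x) ∂ν) : ℝ) : EReal))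
      Filter.atTop (nhds (((∫ x, g x ∂θ) - Real.log Lr : ℝ) : EReal)) :=
    (continuous_coe_real_ereal.tendsto _).comp htend3
  exact le_of_tendsto' htendE hle
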